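/- arXiv:0812.1134 — 3 statements merged into one kernel-verified Lean document; each statement's English description precedes it below -/
import Mathlib

section
/- Assume additionally (iii): C(A) ∩ ℤ^r equals the set of ℤ_{≥0}-linear combinations of a_1, …, a_N. Let α ∈ ℤ^r and p a prime. Let β_1/p, …, β_σ/p be all the apexpoints of K_{α/p} = (α/p + ℤ^r) ∩ C(A), and for each i let Γ_i = {l ∈ ℤ_{≥0}^N : ψ(l) = β_i} and Ψ_i = Σ_{l ∈ Γ_i} (l_1!⋯l_N!)^{-1} v^l ∈ F_p[v_1, …, v_N] (all coordinates of each l ∈ Γ_i are < p, so the factorials are invertible mod p). Then every mod-p solution P ∈ F_p[v_1, …, v_N] of the A-hypergeometric system with parameters (A, α) is an F_p[v_1^p, …, v_N^p]-linear combination of Ψ_1, …, Ψ_σ. -/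
/-!
Write `ψ = Finsupp.weight a` and split an exponent as `f + p • M` with all `f k < p`. Read
coefficientwise and reduced mod `p` (where descending factorials are `p`-periodic), the toric
equations say that `(∏ k, (f k)!) * coeff (f + p • M) P` depends only on `ψ f`, and the Euler
equations put `ψ f / p` in `K_{α/p}` whenever that coefficient is nonzero. If `ψ f / p` is not an
apexpoint, saturation gives another representative of `ψ f` with an entry `≥ p`, whose factorial
vanishes mod `p`, so the coefficient is zero. If `ψ f = β i`, the coefficient is determined by
the one at a fixed representative of `β i`; these form the coefficients of `c i`, a polynomial in
the `X k ^ p`. Apexness of `β i / p` keeps every representative of `β i` in the box `[0, p)ᴺ`, so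
the coefficients of `c i * Ψ i` decompose uniquely.
-/

/-- The cone `C(A)` of nonnegative real linear combinations of the integer vectors `a i`. -/
def coneOf {r N : ℕ} (a : Fin N → Fin r → ℤ) : Set (Fin r → ℝ) :=
  {x | ∃ c : Fin N → ℝ, (∀ i, 0 ≤ c i) ∧ x = ∑ i, c i • fun j => (a i j : ℝ)}

/-- `K_α = (α + ℤ^r) ∩ C(A)`. -/
def Kset {r N : ℕ} (a : Fin N → Fin r → ℤ) (α : Fin r → ℝ) : Set (Fin r → ℝ) :=
  {x | (∃ m : Fin r → ℤ, x = fun j => α j + (m j : ℝ)) ∧ x ∈ coneOf a}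

/-- `p ∈ K_α` is an apexpoint if `p ∉ q + C(A)` for every `q ∈ K_α` with `q ≠ p`. -/
def IsApex {r N : ℕ} (a : Fin N → Fin r → ℤ) (α : Fin r → ℝ) (p : Fin r → ℝ) : Prop :=
  p ∈ Kset a α ∧ ∀ q ∈ Kset a α, q ≠ p → p - q ∉ coneOf a

/-- The differential operator `∏ i ∂_i^(u i)` on `F_p[v_1,…,v_N]`. -/
noncomputable def derivMonomial (p N : ℕ) (u : Fin N → ℕ) :
    Module.End (ZMod p) (MvPolynomial (Fin N) (ZMod p)) :=
  (List.ofFn fun i : Fin N =>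
    (((MvPolynomial.pderiv i).toLinearMap :
        Module.End (ZMod p) (MvPolynomial (Fin N) (ZMod p))) ^ (u i))).prod

/-- `Φ ∈ F_p[v_1,…,v_N]` is a mod-`p` solution of the A-hypergeometric system with
parameters `(A, α)`. -/
def IsModpSolution {r N : ℕ} (p : ℕ) (a : Fin N → Fin r → ℤ) (α : Fin r → ℤ)
    (Φ : MvPolynomial (Fin N) (ZMod p)) : Prop :=
  (∀ l : Fin N → ℤ, (∑ i, l i • a i) = 0 →
      derivMonomial p N (fun i => (l i).toNat) Φ =
      derivMonomial p N (fun i => (-l i).toNat) Φ) ∧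
  (∀ j : Fin r,
      (∑ k, (a k j : ZMod p) • (MvPolynomial.X k * MvPolynomial.pderiv k Φ)) =
        (α j : ZMod p) • Φ)

open MvPolynomial Finsupp
open scoped Nat

section Derivatives

variable {σ R : Type*} [CommSemiring R]

lemma coeff_pderiv_pow (i : σ) (n : ℕ) (Φ : MvPolynomial σ R) (e : σ →₀ ℕ) :
    coeff e ((((pderiv i).toLinearMap : Module.End R (MvPolynomial σ R)) ^ n) Φ) =
      ((e i + n).descFactorial n : R) * coeff (e + single i n) Φ := by
  induction n generalizing Φ with
  | zero => simp
  | succ n ih =>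
    rw [pow_succ, Module.End.mul_apply, ih, Derivation.coeFn_coe, coeff_pderiv,
      add_assoc, ← single_add, Finsupp.add_apply, single_eq_same, ← add_assoc (e i),
      Nat.succ_descFactorial_succ]
    push_cast
    ring

lemma coeff_list_prod_pderiv_pow (u : σ → ℕ) {l : List σ} (hl : l.Nodup)
    (Φ : MvPolynomial σ R) (e : σ →₀ ℕ) :
    coeff e ((l.map fun i =>
        ((pderiv i).toLinearMap : Module.End R (MvPolynomial σ R)) ^ u i).prod Φ) =
      (l.map fun i => ((e i + u i).descFactorial (u i) : R)).prod *
        coeff (e + (l.map fun i => single i (u i)).sum) Φ := by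
  induction l generalizing e with
  | nil => simp
  | cons a t ih =>
    obtain ⟨ha, ht⟩ := List.nodup_cons.mp hl
    have hshift : ∀ i ∈ t, (e + single a (u a)) i = e i := fun i hi => by
      simp [(ne_of_mem_of_not_mem hi ha).symm]
    rw [List.map_cons, List.prod_cons, Module.End.mul_apply, coeff_pderiv_pow, ih ht,
      List.map_congr_left fun i hi => by rw [hshift i hi], List.map_cons, List.prod_cons,
      List.map_cons, List.sum_cons, add_assoc, mul_assoc]

end Derivatives

lemma coeff_derivMonomial {p N : ℕ} (u : Fin N → ℕ) (Φ : MvPolynomial (Fin N) (ZMod p))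
    (e : Fin N →₀ ℕ) :
    coeff e (derivMonomial p N u Φ) =
      (∏ k, ((e k + u k).descFactorial (u k) : ZMod p)) *
        coeff (e + equivFunOnFinite.symm u) Φ := by
  rw [derivMonomial, List.ofFn_eq_map, coeff_list_prod_pderiv_pow u (List.nodup_finRange N),
    Fin.prod_univ_def, equivFunOnFinite_symm_eq_sum, Fin.sum_univ_def]

lemma MvPolynomial.coeff_X_mul_pderiv {σ R : Type*} [CommSemiring R] (i : σ)
    (Φ : MvPolynomial σ R) (d : σ →₀ ℕ) :
    coeff d (X i * pderiv i Φ) = d i * coeff d Φ := by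
  classical
  rw [coeff_X_mul', coeff_pderiv]
  split_ifs with h
  · have hle : single i 1 ≤ d :=
      single_le_iff.mpr (Nat.one_le_iff_ne_zero.mpr (Finsupp.mem_support_iff.mp h))
    rw [tsub_add_cancel_of_le hle, tsub_apply, single_eq_same,
      ← Nat.cast_add_one, Nat.sub_add_cancel (single_le_iff.mp hle), mul_comm]
  · rw [Finsupp.notMem_support_iff.mp h, Nat.cast_zero, zero_mul]

lemma ZMod.natCast_descFactorial_add_mul (p n m k : ℕ) :
    ((n + p * m).descFactorial k : ZMod p) = (n.descFactorial k : ZMod p) := by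
  simp only [← descPochhammer_eval_eq_descFactorial, Nat.cast_add, Nat.cast_mul,
    ZMod.natCast_self, zero_mul, add_zero]

lemma Nat.factorial_eq_factorial_min_mul_descFactorial (n m : ℕ) :
    n ! = (min n m)! * n.descFactorial (n - m) := by
  rw [← Nat.factorial_mul_descFactorial (Nat.sub_le n m), show n - (n - m) = min n m by omega]

lemma prod_factorial_ne_zero {σ : Type*} [Fintype σ] {p : ℕ} (hp : p.Prime) {f : σ →₀ ℕ}
    (hf : ∀ k, f k < p) : (∏ k, ((f k)! : ZMod p)) ≠ 0 := by
  have := Fact.mk hp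
  refine Finset.prod_ne_zero_iff.mpr fun k _ => ?_
  rw [Ne, ZMod.natCast_eq_zero_iff, hp.dvd_factorial]
  exact (hf k).not_ge

section Toric

variable {r N p : ℕ} {a : Fin N → Fin r → ℤ} {α : Fin r → ℤ}
  {P : MvPolynomial (Fin N) (ZMod p)}

lemma weight_eq_sum_intCast_smul (d : Fin N →₀ ℕ) :
    weight a d = ∑ k, (d k : ℤ) • a k := by
  simp [weight_eq_sum]

lemma IsModpSolution.descFactorial_mul_coeff_eq (hP : IsModpSolution p a α P)
    {d d' : Fin N →₀ ℕ} (h : weight a d = weight a d') :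
    (∏ k, ((d k).descFactorial (d k - d' k) : ZMod p)) * coeff d P =
      (∏ k, ((d' k).descFactorial (d' k - d k) : ZMod p)) * coeff d' P := by
  have hl : ∑ k, ((d k : ℤ) - d' k) • a k = 0 := by
    simp only [sub_smul, Finset.sum_sub_distrib, ← weight_eq_sum_intCast_smul, h, sub_self]
  have key := congrArg (coeff (d ⊓ d')) (hP.1 _ hl)
  have hk : ∀ x y : Fin N →₀ ℕ, ∀ k, (x ⊓ y) k + (x k - y k) = x k := fun x y k => by
    simp only [inf_apply]; omega
  have he : ∀ x y : Fin N →₀ ℕ, x ⊓ y + equivFunOnFinite.symm (fun k => x k - y k) = x :=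
    fun x y => by ext k; simp only [Finsupp.add_apply, coe_equivFunOnFinite_symm, hk]
  have hk' : ∀ x y : Fin N →₀ ℕ, ∀ k, (x ⊓ y) k + (y k - x k) = y k := fun x y k => by
    rw [inf_comm]; exact hk y x k
  have he' : ∀ x y : Fin N →₀ ℕ, x ⊓ y + equivFunOnFinite.symm (fun k => y k - x k) = y :=
    fun x y => by rw [inf_comm]; exact he y x
  simpa only [neg_sub, Int.toNat_sub, coeff_derivMonomial, hk, hk', he, he'] using key

lemma IsModpSolution.factorial_mul_coeff_add_smul_eq (hP : IsModpSolution p a α P)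
    {u u' : Fin N →₀ ℕ} (h : weight a u = weight a u') (M : Fin N →₀ ℕ) :
    (∏ k, ((u k)! : ZMod p)) * coeff (u + p • M) P =
      (∏ k, ((u' k)! : ZMod p)) * coeff (u' + p • M) P := by
  have key := hP.descFactorial_mul_coeff_eq (d := u + p • M) (d' := u' + p • M)
    (by rw [map_add, map_add, h])
  simp only [Finsupp.add_apply, Finsupp.smul_apply, smul_eq_mul, Nat.add_sub_add_right,
    ZMod.natCast_descFactorial_add_mul] at key
  have hsplit : ∀ v v' : Fin N →₀ ℕ, (∏ k, ((v k)! : ZMod p)) =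
      (∏ k, ((min (v k) (v' k))! : ZMod p)) *
        ∏ k, ((v k).descFactorial (v k - v' k) : ZMod p) := fun v v' => by
    rw [← Finset.prod_mul_distrib]
    exact Finset.prod_congr rfl fun k _ => by
      rw [← Nat.cast_mul, ← Nat.factorial_eq_factorial_min_mul_descFactorial]
  rw [hsplit u u', hsplit u' u, mul_assoc, key, ← mul_assoc]
  simp only [min_comm]

lemma IsModpSolution.coeff_add_smul_eq_zero_of_weight_eq (hP : IsModpSolution p a α P)
    (hp : p.Prime) {f w : Fin N →₀ ℕ} (hf : ∀ k, f k < p) (hw : weight a w = weight a f)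
    {k : Fin N} (hk : p ≤ w k) (M : Fin N →₀ ℕ) : coeff (f + p • M) P = 0 := by
  have := Fact.mk hp
  have key := hP.factorial_mul_coeff_add_smul_eq hw M
  rw [Finset.prod_eq_zero (Finset.mem_univ k)
    ((ZMod.natCast_eq_zero_iff _ _).mpr (Nat.dvd_factorial hp.pos hk)), zero_mul] at key
  exact (mul_eq_zero.mp key.symm).resolve_left (prod_factorial_ne_zero hp hf)

end Toric

lemma intCast_weight_eq_of_coeff_ne_zero {r N : ℕ} {K : Type*} [CommRing K] [IsDomain K]
    {a : Fin N → Fin r → ℤ} {α : Fin r → ℤ} {Φ : MvPolynomial (Fin N) K}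
    (hΦ : ∀ j, ∑ k, (a k j : K) • (X k * pderiv k Φ) = (α j : K) • Φ)
    {d : Fin N →₀ ℕ} (hd : coeff d Φ ≠ 0) (j : Fin r) :
    ((weight a d j : ℤ) : K) = α j := by
  have key := congrArg (coeff d) (hΦ j)
  simp only [coeff_sum, coeff_smul, coeff_X_mul_pderiv, smul_eq_mul, ← mul_assoc,
    ← Finset.sum_mul] at key
  rw [← mul_right_cancel₀ hd key, weight_eq_sum, Finset.sum_apply]
  push_cast
  exact Finset.sum_congr rfl fun k _ => by
    simp only [Pi.smul_apply, nsmul_eq_mul]; push_cast; ring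

section Digits

variable {σ : Type*} {p : ℕ}

lemma Finsupp.exists_add_smul_eq (hp : 0 < p) (e : σ →₀ ℕ) :
    ∃ f M : σ →₀ ℕ, (∀ k, f k < p) ∧ f + p • M = e :=
  ⟨e.mapRange (· % p) (Nat.zero_mod p), e.mapRange (· / p) (Nat.zero_div p),
    fun k => Nat.mod_lt _ hp, by ext k; simp [Nat.mod_add_div]⟩

lemma Finsupp.eq_of_add_smul_eq (hp : 0 < p) {f g M M' : σ →₀ ℕ} (hf : ∀ k, f k < p)
    (hg : ∀ k, g k < p) (h : f + p • M = g + p • M') : f = g ∧ M = M' := by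
  have hk : ∀ k, f k + p * M k = g k + p * M' k := fun k => by
    simpa using DFunLike.congr_fun h k
  have hfg : f = g := by
    ext k
    simpa [Nat.add_mul_mod_self_left, Nat.mod_eq_of_lt (hf k), Nat.mod_eq_of_lt (hg k)] using
      congrArg (· % p) (hk k)
  subst hfg
  exact ⟨rfl, by ext k; exact Nat.eq_of_mul_eq_mul_left hp (by simpa using hk k)⟩

variable {R : Type*} [CommSemiring R]

lemma MvPolynomial.exists_coeff_eq_coeff_add_smul (hp : p ≠ 0) (u : σ →₀ ℕ)
    (P : MvPolynomial σ R) :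
    ∃ Q : MvPolynomial σ R, ∀ M, coeff M Q = coeff (u + p • M) P := by
  classical
  have hinj : Function.Injective fun M : σ →₀ ℕ => u + p • M := fun M M' h =>
    (nsmul_right_inj hp).mp (add_left_cancel h)
  refine ⟨∑ M ∈ P.support.preimage _ hinj.injOn, monomial M (coeff (u + p • M) P),
    fun M => ?_⟩
  rw [coeff_sum]
  simp only [coeff_monomial, Finset.sum_ite_eq', Finset.mem_preimage, ite_eq_left_iff]
  exact fun h => (notMem_support_iff.mp h).symm

lemma MvPolynomial.coeff_add_smul_expand_mul (hp : p ≠ 0) (Q : MvPolynomial σ R)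
    {Ψ : MvPolynomial σ R} (hΨ : ∀ d ∈ Ψ.support, ∀ k, d k < p) {f : σ →₀ ℕ}
    (hf : ∀ k, f k < p) (M : σ →₀ ℕ) :
    coeff (f + p • M) (expand p Q * Ψ) = coeff M Q * coeff f Ψ := by
  classical
  rw [coeff_mul, Finset.sum_eq_single (p • M, f)]
  · rw [coeff_expand_smul _ hp]
  · rintro ⟨x, y⟩ hxy hne
    by_contra hnz
    obtain ⟨M', -, rfl⟩ := Finset.mem_image.mp
      (support_expand_subset Q (mem_support_iff.mpr (left_ne_zero_of_mul hnz)))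
    obtain ⟨rfl, rfl⟩ := Finsupp.eq_of_add_smul_eq (Nat.pos_of_ne_zero hp)
      (hΨ y (mem_support_iff.mpr (right_ne_zero_of_mul hnz))) hf
      (by rw [add_comm]; exact Finset.HasAntidiagonal.mem_antidiagonal.mp hxy)
    exact hne rfl
  · exact fun h => absurd (Finset.HasAntidiagonal.mem_antidiagonal.mpr (add_comm _ _)) h

lemma MvPolynomial.expand_mem_adjoin_range_X_pow (Q : MvPolynomial σ R) :
    expand p Q ∈ Algebra.adjoin R (Set.range fun k => (X k : MvPolynomial σ R) ^ p) := by
  rw [Algebra.adjoin_range_eq_range_aeval]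
  exact ⟨Q, rfl⟩

end Digits

section Cone

variable {r N : ℕ} {a : Fin N → Fin r → ℤ}

lemma smul_mem_coneOf {x : Fin r → ℝ} (hx : x ∈ coneOf a) {t : ℝ} (ht : 0 ≤ t) :
    t • x ∈ coneOf a := by
  obtain ⟨c, hc, rfl⟩ := hx
  exact ⟨t • c, fun i => mul_nonneg ht (hc i), by simp [Finset.smul_sum, smul_smul]⟩

lemma weight_mem_coneOf (d : Fin N →₀ ℕ) : (fun j => (weight a d j : ℝ)) ∈ coneOf a :=
  ⟨fun i => d i, fun i => Nat.cast_nonneg _, by ext j; simp [weight_eq_sum, Finset.sum_apply]⟩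

def IsSaturated (a : Fin N → Fin r → ℤ) : Prop :=
  ∀ x : Fin r → ℤ, (fun j => (x j : ℝ)) ∈ coneOf a →
    ∃ d : Fin N →₀ ℕ, weight a d = x

lemma isSaturated_of_forall_mem_coneOf_iff
    (hiii : ∀ x : Fin r → ℤ, ((fun j => (x j : ℝ)) ∈ coneOf a ↔
      ∃ c : Fin N → ℕ, x = ∑ i, c i • a i)) : IsSaturated a := fun x hx => by
  obtain ⟨c, rfl⟩ := (hiii x).mp hx
  exact ⟨equivFunOnFinite.symm c, by simp [weight_eq_sum]⟩

variable {p : ℕ}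

lemma div_mem_coneOf_iff (hp : 0 < p) {x : Fin r → ℤ} :
    (fun j => (x j : ℝ) / p) ∈ coneOf a ↔ (fun j => (x j : ℝ)) ∈ coneOf a := by
  have hp' : (p : ℝ) ≠ 0 := by positivity
  constructor <;> intro h
  · convert smul_mem_coneOf h (Nat.cast_nonneg p) using 1
    ext j; simp [mul_div_cancel₀ _ hp']
  · convert smul_mem_coneOf h (inv_nonneg.mpr (Nat.cast_nonneg p)) using 1
    ext j; simp [div_eq_inv_mul]

lemma div_mem_Kset_iff (hp : 0 < p) {α x : Fin r → ℤ} :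
    (fun j => (x j : ℝ) / p) ∈ Kset a (fun j => (α j : ℝ) / p) ↔
      (∀ j, (p : ℤ) ∣ x j - α j) ∧ (fun j => (x j : ℝ)) ∈ coneOf a := by
  have hp' : (p : ℝ) ≠ 0 := by positivity
  have key : ∀ j (m : ℤ), (x j : ℝ) / p = (α j : ℝ) / p + m ↔ x j - α j = p * m := by
    intro j m
    rw [div_add' _ _ _ hp', div_left_inj' hp', ← sub_eq_iff_eq_add', mul_comm]
    norm_cast
  simp only [Kset, Set.mem_ofPred_eq, funext_iff, key, div_mem_coneOf_iff hp]
  exact and_congr_left' (Classical.skolem (p := fun j c => x j - α j = p * c)).symm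

lemma IsApex.lt_of_weight_eq {α β : Fin r → ℤ}
    (hβ : IsApex a (fun j => (α j : ℝ) / p) (fun j => (β j : ℝ) / p)) (ha : ∀ k, a k ≠ 0)
    (hp : 0 < p) {d : Fin N →₀ ℕ} (hd : weight a d = β) (k : Fin N) : d k < p := by
  by_contra! hk
  have hsplit : weight a (d - single k p) = β - p • a k := by
    rw [eq_sub_iff_add_eq, ← weight_single, ← map_add,
      tsub_add_cancel_of_le (single_le_iff.mpr hk), hd]
  have hp' : (p : ℝ) ≠ 0 := by positivity
  have hcong := ((div_mem_Kset_iff hp).mp hβ.1).1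
  refine hβ.2 (fun j => ((β - p • a k) j : ℝ) / p)
    ((div_mem_Kset_iff hp).mpr ⟨fun j => ?_, ?_⟩) (fun h => ha k ?_) ?_
  · simpa [sub_right_comm] using dvd_sub (hcong j) (dvd_mul_right (p : ℤ) (a k j))
  · rw [← hsplit]
    exact weight_mem_coneOf _
  · ext j
    have := congrFun h j
    field_simp at this
    simpa [hp'] using this
  · convert weight_mem_coneOf (a := a) (single k 1) using 1
    ext j
    simp [weight_single, sub_div, hp']

lemma exists_weight_eq_of_not_isApex (hsat : IsSaturated a) (hp : 0 < p) {α : Fin r → ℤ}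
    {d : Fin N →₀ ℕ}
    (hK : (fun j => (weight a d j : ℝ) / p) ∈ Kset a (fun j => (α j : ℝ) / p))
    (hna : ¬ IsApex a (fun j => (α j : ℝ) / p) (fun j => (weight a d j : ℝ) / p)) :
    ∃ w : Fin N →₀ ℕ, weight a w = weight a d ∧ ∃ k, p ≤ w k := by
  have hp' : (p : ℝ) ≠ 0 := by positivity
  choose D hD using ((div_mem_Kset_iff hp).mp hK).1
  have hDr : ∀ j, (weight a d j : ℝ) = α j + p * D j := fun j => by
    exact_mod_cast (by linarith [hD j] : weight a d j = α j + p * D j)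
  obtain ⟨q, ⟨⟨m, rfl⟩, hqc⟩, hne, hdiff⟩ : ∃ q ∈ Kset a (fun j => (α j : ℝ) / p),
      q ≠ (fun j => (weight a d j : ℝ) / p) ∧
        (fun j => (weight a d j : ℝ) / p) - q ∈ coneOf a := by
    simpa [IsApex, hK] using hna
  obtain ⟨s, hs⟩ := hsat (α + (p : ℤ) • m) (by
    convert smul_mem_coneOf hqc (Nat.cast_nonneg p) using 1
    ext j
    simp only [zsmul_eq_mul, Int.cast_natCast, Pi.add_apply, Pi.mul_apply, Pi.natCast_apply,
      Int.cast_add, Int.cast_mul, Pi.smul_apply, smul_eq_mul]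
    field_simp)
  obtain ⟨t, ht⟩ := hsat (D - m) (by
    convert hdiff using 1
    ext j
    simp only [Pi.sub_apply, Int.cast_sub, hDr]
    field_simp
    ring)
  obtain ⟨k, hk⟩ : ∃ k, t k ≠ 0 := by
    by_contra! h
    have hDm : D = m := sub_eq_zero.mp (by rw [← ht, show t = 0 from Finsupp.ext h, map_zero])
    refine hne (funext fun j => ?_)
    simp only [hDr, hDm]
    field_simp
  refine ⟨s + p • t, ?_, k, ?_⟩
  · ext j
    simp only [map_add, hs, map_nsmul, ht, zsmul_eq_mul, nsmul_eq_mul, Int.cast_natCast,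
      Pi.add_apply, Pi.mul_apply, Pi.natCast_apply, Pi.sub_apply]
    linear_combination -hD j
  · simpa using le_add_left (Nat.le_mul_of_pos_right p (Nat.pos_of_ne_zero hk))

end Cone

lemma IsModpSolution.coeff_add_smul_eq_zero_of_not_isApex {r N p : ℕ}
    {a : Fin N → Fin r → ℤ} {α : Fin r → ℤ} {P : MvPolynomial (Fin N) (ZMod p)}
    (hP : IsModpSolution p a α P)
    (hp : p.Prime) (hsat : IsSaturated a) {f : Fin N →₀ ℕ} (hf : ∀ k, f k < p)
    (hna : ¬ IsApex a (fun j => (α j : ℝ) / p) (fun j => (weight a f j : ℝ) / p))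
    (M : Fin N →₀ ℕ) : coeff (f + p • M) P = 0 := by
  have := Fact.mk hp
  by_contra h
  have hcong : ∀ j, ((weight a f j : ℤ) : ZMod p) = α j := fun j => by
    simpa using intCast_weight_eq_of_coeff_ne_zero hP.2 h j
  have hK := (div_mem_Kset_iff hp.pos).mpr
    ⟨fun j => (ZMod.intCast_eq_intCast_iff_dvd_sub _ _ _).mp (hcong j).symm,
      weight_mem_coneOf f⟩
  obtain ⟨w, hw, k, hk⟩ := exists_weight_eq_of_not_isApex hsat hp.pos hK hna
  exact h (hP.coeff_add_smul_eq_zero_of_weight_eq hp hf hw hk M)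

theorem modp_solutions_spanned_by_apex_solutions_general (r N : ℕ) (p : ℕ) (hp : p.Prime)
    (a : Fin N → Fin r → ℤ)
    (hhom : ∃ h : (Fin r → ℝ) →ₗ[ℝ] ℝ, ∀ i, h (fun j => (a i j : ℝ)) = 1)
    (hiii : ∀ x : Fin r → ℤ, ((fun j => (x j : ℝ)) ∈ coneOf a ↔
        ∃ c : Fin N → ℕ, x = ∑ i, c i • a i))
    (α : Fin r → ℤ) (σ : ℕ) (β : Fin σ → Fin r → ℤ)
    (hβinj : Function.Injective β)
    (hβapex : ∀ i, IsApex a (fun j => (α j : ℝ) / p) (fun j => (β i j : ℝ) / p))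
    (hβall : ∀ x : Fin r → ℝ, IsApex a (fun j => (α j : ℝ) / p) x →
        ∃ i, x = fun j => (β i j : ℝ) / p)
    (Ψ : Fin σ → MvPolynomial (Fin N) (ZMod p))
    (hΨ : ∀ i, ∀ d : Fin N →₀ ℕ, (Ψ i).coeff d =
        if (∑ k, (d k : ℤ) • a k) = β i
        then (∏ k, ((d k).factorial : ZMod p))⁻¹ else 0)
    (P : MvPolynomial (Fin N) (ZMod p)) (hP : IsModpSolution p a α P) :
    ∃ c : Fin σ → MvPolynomial (Fin N) (ZMod p),
      (∀ i, c i ∈ Algebra.adjoin (ZMod p)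
        (Set.range fun k => (MvPolynomial.X k : MvPolynomial (Fin N) (ZMod p)) ^ p)) ∧
      P = ∑ i, c i * Ψ i := by
  have := Fact.mk hp
  have hsat := isSaturated_of_forall_mem_coneOf_iff hiii
  have ha : ∀ k, a k ≠ 0 := fun k hk => by
    obtain ⟨h, hh⟩ := hhom
    simpa [hk, ← Pi.zero_def] using hh k
  simp_rw [← weight_eq_sum_intCast_smul] at hΨ
  have hΨbox : ∀ i, ∀ d ∈ (Ψ i).support, ∀ k, d k < p := fun i d hd =>
    (hβapex i).lt_of_weight_eq ha hp.pos (by by_contra h; simp [hΨ, h] at hd)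
  choose u hu using fun i => hsat (β i) ((div_mem_Kset_iff hp.pos).mp (hβapex i).1).2
  choose Q hQ using fun i => exists_coeff_eq_coeff_add_smul hp.ne_zero (u i) P
  refine ⟨fun i => (∏ k, ((u i k)! : ZMod p)) • expand p (Q i),
    fun i => Subalgebra.smul_mem _ (expand_mem_adjoin_range_X_pow _) _, ?_⟩
  ext e
  obtain ⟨f, M, hf, rfl⟩ := exists_add_smul_eq hp.pos e
  simp only [coeff_sum, smul_mul_assoc, coeff_smul, smul_eq_mul,
    coeff_add_smul_expand_mul hp.ne_zero _ (hΨbox _) hf, hQ, hΨ]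
  by_cases hβf : ∃ i, weight a f = β i
  · obtain ⟨i, hi⟩ := hβf
    rw [Finset.sum_eq_single i (fun i' _ hi' => by simp [hi, hβinj.ne hi'.symm]) (by simp),
      if_pos hi, ← mul_assoc, hP.factorial_mul_coeff_add_smul_eq ((hu i).trans hi.symm),
      mul_comm, ← mul_assoc, inv_mul_cancel₀ (prod_factorial_ne_zero hp hf), one_mul]
  · push Not at hβf
    rw [Finset.sum_eq_zero fun i _ => by simp [hβf i]]
    refine hP.coeff_add_smul_eq_zero_of_not_isApex hp hsat hf (fun happ => ?_) M
    obtain ⟨i, hi⟩ := hβall _ happ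
    exact hβf i (funext fun j => by
      exact_mod_cast (div_left_inj' (Nat.cast_ne_zero.mpr hp.ne_zero)).mp (congrFun hi j))

/-- every mod-`p` polynomial solution of the A-hypergeometric system with
parameters `(A, α)`, `α ∈ ℤ^r`, is an `F_p[v_1^p,…,v_N^p]`-linear combination of the
polynomials `Ψ_i` attached to the apexpoints `β_i/p` of `K_{α/p}`. -/
theorem modp_solutions_spanned_by_apex_solutions (r N : ℕ) (p : ℕ) (hp : p.Prime)
    (a : Fin N → Fin r → ℤ)
    (hspan : Submodule.span ℤ (Set.range a) = ⊤)
    (hhom : ∃ h : (Fin r → ℝ) →ₗ[ℝ] ℝ, ∀ i, h (fun j => (a i j : ℝ)) = 1)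
    (hiii : ∀ x : Fin r → ℤ, ((fun j => (x j : ℝ)) ∈ coneOf a ↔
        ∃ c : Fin N → ℕ, x = ∑ i, c i • a i))
    (α : Fin r → ℤ) (σ : ℕ) (β : Fin σ → Fin r → ℤ)
    (hβinj : Function.Injective β)
    (hβapex : ∀ i, IsApex a (fun j => (α j : ℝ) / p) (fun j => (β i j : ℝ) / p))
    (hβall : ∀ x : Fin r → ℝ, IsApex a (fun j => (α j : ℝ) / p) x →
        ∃ i, x = fun j => (β i j : ℝ) / p)
    (Ψ : Fin σ → MvPolynomial (Fin N) (ZMod p))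
    (hΨ : ∀ i, ∀ d : Fin N →₀ ℕ, (Ψ i).coeff d =
        if (∑ k, (d k : ℤ) • a k) = β i
        then (∏ k, ((d k).factorial : ZMod p))⁻¹ else 0)
    (P : MvPolynomial (Fin N) (ZMod p)) (hP : IsModpSolution p a α P) :
    ∃ c : Fin σ → MvPolynomial (Fin N) (ZMod p),
      (∀ i, c i ∈ Algebra.adjoin (ZMod p)
        (Set.range fun k => (MvPolynomial.X k : MvPolynomial (Fin N) (ZMod p)) ^ p)) ∧
      P = ∑ i, c i * Ψ i :=
  modp_solutions_spanned_by_apex_solutions_general r N p hp a hhom hiii α σ β hβinj hβapex hβall Ψ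
    hΨ P hP
end

section
/- Let A = {a_1, a_2, a_3, a_4} ⊂ ℤ^2 with a_1 = (−1,2), a_2 = (0,1), a_3 = (1,0), a_4 = (2,−1), so that C(A) = {(x,y) ∈ ℝ^2 : 2x + y ≥ 0, x + 2y ≥ 0}. Let a, b ∈ ℝ satisfy either (a − 1/2 ∈ ℤ and (b − 1/3 ∈ ℤ or b − 2/3 ∈ ℤ)) or ((a − 1/3 ∈ ℤ or a − 2/3 ∈ ℤ) and b − 1/2 ∈ ℤ), and set α = (−a, −b). Then K_α has exactly three apexpoints. -/
/-- The Horn G3 set `A = {(-1,2), (0,1), (1,0), (2,-1)} ⊂ ℤ²`. -/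
def hornG3 : Fin 4 → Fin 2 → ℤ := ![![-1, 2], ![0, 1], ![1, 0], ![2, -1]]

/-!
In the coordinates `u = 2x + y`, `v = x + 2y` the cone `C(A)` is the closed positive quadrant and
the vectors of `A` become `(0,3), (1,2), (2,1), (3,0)`. Every nonzero lattice point of the cone
dominates one of them, so `p ∈ K_α` is an apexpoint iff no `p - a_i` lies in the cone: `(u, v)`
lies in the staircase `[0,3)² \ ([1,3) × [2,3) ∪ [2,3) × [1,3))`. Reducing `α` modulo `ℤ²` to
`(-r, -s)`, a point of `K_α` is `m - (r, s)` with `m ∈ ℤ²`, and `u = 2m₀ + m₁ - (2r + s)`,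
`v = m₀ + 2m₁ - (r + 2s)`. For the four admissible `α` both `2r + s` and `r + 2s` lie in
`(1, 2]`, and then the staircase contains exactly the points with `m ∈ {(0,2), (1,1), (2,0)}`.
-/

section GeneralCone

variable {r N : ℕ} (a : Fin N → Fin r → ℤ)

theorem add_mem_coneOf {x y : Fin r → ℝ} (hx : x ∈ coneOf a) (hy : y ∈ coneOf a) :
    x + y ∈ coneOf a := by
  obtain ⟨c, hc, rfl⟩ := hx
  obtain ⟨d, hd, rfl⟩ := hy
  exact ⟨c + d, fun i => add_nonneg (hc i) (hd i), by simp [add_smul, Finset.sum_add_distrib]⟩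

theorem generator_mem_coneOf (i : Fin N) : (fun j => (a i j : ℝ)) ∈ coneOf a := by
  refine ⟨Pi.single i 1, fun k => ?_, by simp [Pi.single_apply]⟩
  by_cases h : k = i <;> simp [h]

theorem Kset_add_intCast (α : Fin r → ℝ) (m : Fin r → ℤ) :
    Kset a (α + fun j => (m j : ℝ)) = Kset a α := by
  ext x
  simp only [Kset, Set.mem_ofPred_eq, Pi.add_apply]
  constructor
  · rintro ⟨⟨n, rfl⟩, hx⟩
    exact ⟨⟨m + n, by ext j; simp only [Pi.add_apply, Int.cast_add]; ring⟩, hx⟩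
  · rintro ⟨⟨n, rfl⟩, hx⟩
    exact ⟨⟨n - m, by ext j; simp⟩, hx⟩

theorem isApex_add_intCast (α : Fin r → ℝ) (m : Fin r → ℤ) (p : Fin r → ℝ) :
    IsApex a (α + fun j => (m j : ℝ)) p ↔ IsApex a α p := by
  simp only [IsApex, Kset_add_intCast]

theorem isApex_iff_forall_sub_generator_notMem (ha : ∀ i, a i ≠ 0)
    (hbasis : ∀ d : Fin r → ℤ, d ≠ 0 → (fun j => (d j : ℝ)) ∈ coneOf a →
      ∃ i, (fun j => ((d - a i) j : ℝ)) ∈ coneOf a)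
    (α p : Fin r → ℝ) :
    IsApex a α p ↔ p ∈ Kset a α ∧ ∀ i, p - (fun j => (a i j : ℝ)) ∉ coneOf a := by
  constructor
  · rintro ⟨hp, hmin⟩
    refine ⟨hp, fun i hi => hmin (p - fun j => (a i j : ℝ)) ?_ ?_ ?_⟩
    · obtain ⟨⟨m, rfl⟩, -⟩ := hp
      exact ⟨⟨m - a i, by ext j; simp only [Pi.sub_apply, Int.cast_sub]; ring⟩, hi⟩
    · intro h
      apply ha i
      ext j
      simpa using congrFun h j
    · simpa using generator_mem_coneOf a i
  · rintro ⟨hp, hmin⟩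
    refine ⟨hp, fun q ⟨⟨n, hn⟩, hq⟩ hne hpq => ?_⟩
    obtain ⟨⟨m, hm⟩, -⟩ := hp
    have hd : p - q = fun j => ((m - n) j : ℝ) := by
      ext j; simp [hm, hn]
    have hd0 : m - n ≠ 0 := fun h => hne (by rw [hn, hm, sub_eq_zero.1 h])
    obtain ⟨i, hi⟩ := hbasis _ hd0 (hd ▸ hpq)
    refine hmin i ?_
    have : p - (fun j => (a i j : ℝ)) = q + fun j => ((m - n - a i) j : ℝ) := by
      ext j; simp only [hm, hn, Pi.sub_apply, Pi.add_apply, Int.cast_sub]; ring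
    exact this ▸ add_mem_coneOf a hq hi

end GeneralCone

theorem mem_coneOf_hornG3_iff (x : Fin 2 → ℝ) :
    x ∈ coneOf hornG3 ↔ 0 ≤ 2 * x 0 + x 1 ∧ 0 ≤ x 0 + 2 * x 1 := by
  constructor
  · rintro ⟨c, hc, rfl⟩
    simp only [hornG3, Matrix.cons_val', Matrix.cons_val_fin_one, Finset.sum_apply, Pi.smul_apply,
      Matrix.cons_val_zero, smul_eq_mul, Fin.sum_univ_four, Int.cast_neg, Int.cast_one, mul_neg,
      mul_one, Matrix.cons_val_one, Int.cast_zero, mul_zero, add_zero, Matrix.cons_val,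
      Int.cast_ofNat]
    constructor <;> linarith [hc 0, hc 1, hc 2, hc 3]
  · rintro ⟨hu, hv⟩
    refine ⟨![(x 0 + 2 * x 1) / 3, 0, 0, (2 * x 0 + x 1) / 3], ?_, ?_⟩
    · intro i; fin_cases i <;> simp <;> linarith
    · ext j; fin_cases j <;> simp [Fin.sum_univ_four, hornG3] <;> ring

theorem sub_mem_coneOf_hornG3_iff (x y : Fin 2 → ℝ) :
    x - y ∈ coneOf hornG3 ↔ 2 * y 0 + y 1 ≤ 2 * x 0 + x 1 ∧ y 0 + 2 * y 1 ≤ x 0 + 2 * x 1 := by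
  simp only [mem_coneOf_hornG3_iff, Pi.sub_apply]
  constructor <;> rintro ⟨h1, h2⟩ <;> constructor <;> linarith

theorem hornG3_ne_zero (i : Fin 4) : hornG3 i ≠ 0 := by
  fin_cases i <;> decide

theorem exists_sub_hornG3_mem_coneOf (d : Fin 2 → ℤ) (hd0 : d ≠ 0)
    (hd : (fun j => (d j : ℝ)) ∈ coneOf hornG3) :
    ∃ i, (fun j => ((d - hornG3 i) j : ℝ)) ∈ coneOf hornG3 := by
  have hd0' : d 0 ≠ 0 ∨ d 1 ≠ 0 := by
    contrapose! hd0; ext j; fin_cases j <;> simp [hd0]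
  simp only [mem_coneOf_hornG3_iff, Fin.exists_fin_succ, Pi.sub_apply] at hd ⊢
  norm_cast at hd ⊢
  simp only [hornG3, Matrix.cons_val', Matrix.cons_val_zero, Matrix.cons_val_one,
    Matrix.cons_val_fin_one, Matrix.cons_val, Matrix.cons_val_succ, Fin.succ_zero_eq_one,
    Fin.succ_one_eq_two, Fin.reduceSucc, IsEmpty.exists_iff, or_false]
  omega

theorem isApex_hornG3_iff (α p : Fin 2 → ℝ) :
    IsApex hornG3 α p ↔ p ∈ Kset hornG3 α ∧
      ¬(0 ≤ 2 * p 0 + p 1 ∧ 3 ≤ p 0 + 2 * p 1) ∧ ¬(1 ≤ 2 * p 0 + p 1 ∧ 2 ≤ p 0 + 2 * p 1) ∧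
      ¬(2 ≤ 2 * p 0 + p 1 ∧ 1 ≤ p 0 + 2 * p 1) ∧ ¬(3 ≤ 2 * p 0 + p 1 ∧ 0 ≤ p 0 + 2 * p 1) := by
  rw [isApex_iff_forall_sub_generator_notMem hornG3 hornG3_ne_zero exists_sub_hornG3_mem_coneOf]
  simp only [Fin.forall_fin_succ, sub_mem_coneOf_hornG3_iff, IsEmpty.forall_iff, and_true,
    Fin.succ_zero_eq_one, Fin.succ_one_eq_two]
  norm_num only [hornG3, Matrix.cons_val_zero, Matrix.cons_val_one, Matrix.cons_val_two,
    Matrix.cons_val_succ, Matrix.tail_cons, Matrix.head_cons]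

theorem setOf_isApex_hornG3 {r s : ℝ} (hU : 2 * r + s ∈ Set.Ioc 1 2)
    (hV : r + 2 * s ∈ Set.Ioc 1 2) :
    {x | IsApex hornG3 ![-r, -s] x} = {![-r, 2 - s], ![1 - r, 1 - s], ![2 - r, -s]} := by
  obtain ⟨hU1, hU2⟩ := hU
  obtain ⟨hV1, hV2⟩ := hV
  ext p
  simp only [Set.mem_ofPred_eq, isApex_hornG3_iff, Kset, mem_coneOf_hornG3_iff]
  constructor
  · rintro ⟨⟨⟨m, hm⟩, hu, hv⟩, h03, -, -, h30⟩
    have hu' : 2 * p 0 + p 1 = (2 * m 0 + m 1 : ℤ) - (2 * r + s) := by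
      simp only [hm, Matrix.cons_val_zero, Matrix.cons_val_one, Matrix.cons_val_fin_one]
      push_cast; ring
    have hv' : p 0 + 2 * p 1 = (m 0 + 2 * m 1 : ℤ) - (r + 2 * s) := by
      simp only [hm, Matrix.cons_val_zero, Matrix.cons_val_one, Matrix.cons_val_fin_one]
      push_cast; ring
    have hS : 1 < 2 * m 0 + m 1 := by
      exact_mod_cast (by linarith : (1 : ℝ) < (2 * m 0 + m 1 : ℤ))
    have hT : 1 < m 0 + 2 * m 1 := by
      exact_mod_cast (by linarith : (1 : ℝ) < (m 0 + 2 * m 1 : ℤ))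
    have hS' : 2 * m 0 + m 1 < 5 := by
      have : ((2 * m 0 + m 1 : ℤ) : ℝ) < 5 := by by_contra! h; exact h30 ⟨by linarith, hv⟩
      exact_mod_cast this
    have hT' : m 0 + 2 * m 1 < 5 := by
      have : ((m 0 + 2 * m 1 : ℤ) : ℝ) < 5 := by by_contra! h; exact h03 ⟨hu, by linarith⟩
      exact_mod_cast this
    -- adding the bounds gives `4 ≤ 3 (m 0 + m 1) ≤ 8`, so `m 0 + m 1 = 2`
    obtain ⟨h0, h1⟩ | ⟨h0, h1⟩ | ⟨h0, h1⟩ :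
        (m 0 = 0 ∧ m 1 = 2) ∨ (m 0 = 1 ∧ m 1 = 1) ∨ (m 0 = 2 ∧ m 1 = 0) := by omega
    · left; ext j; fin_cases j <;> simp [hm, h0, h1, neg_add_eq_sub]
    · right; left; ext j; fin_cases j <;> simp [hm, h0, h1, neg_add_eq_sub]
    · right; right; ext j; fin_cases j <;> simp [hm, h0, h1, neg_add_eq_sub]
  · rintro (rfl | rfl | rfl) <;>
      simp only [Matrix.cons_val_zero, Matrix.cons_val_one, Matrix.cons_val_fin_one, not_and,
        not_le]
    · exact ⟨⟨⟨![0, 2], by ext j; fin_cases j <;> simp [neg_add_eq_sub]⟩, by linarith, by linarith⟩,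
        fun _ => by linarith, fun _ => by linarith, fun _ => by linarith, fun _ => by linarith⟩
    · exact ⟨⟨⟨![1, 1], by ext j; fin_cases j <;> simp [neg_add_eq_sub]⟩, by linarith, by linarith⟩,
        fun _ => by linarith, fun _ => by linarith, fun _ => by linarith, fun _ => by linarith⟩
    · exact ⟨⟨⟨![2, 0], by ext j; fin_cases j <;> simp [neg_add_eq_sub]⟩, by linarith, by linarith⟩,
        fun _ => by linarith, fun _ => by linarith, fun _ => by linarith, fun _ => by linarith⟩

theorem ncard_setOf_isApex_hornG3 {a b r s : ℝ} (hU : 2 * r + s ∈ Set.Ioc 1 2)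
    (hV : r + 2 * s ∈ Set.Ioc 1 2) (ha : ∃ k : ℤ, a - r = k) (hb : ∃ l : ℤ, b - s = l) :
    {x | IsApex hornG3 ![-a, -b] x}.ncard = 3 := by
  obtain ⟨k, hk⟩ := ha
  obtain ⟨l, hl⟩ := hb
  have hα : ![-a, -b] = ![-r, -s] + fun j => ((![-k, -l] j : ℤ) : ℝ) := by
    ext j; fin_cases j <;> simp <;> linarith
  simp only [hα, isApex_add_intCast, setOf_isApex_hornG3 hU hV]
  refine Set.ncard_eq_three.2 ⟨_, _, _, ?_, ?_, ?_, rfl⟩ <;> intro h <;>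
    have h0 := congrFun h 0 <;> simp only [Matrix.cons_val_zero] at h0 <;> linarith

/-- for the Horn G3 configuration, if `a ≡ 1/2` and `b ≡ 1/3` or `2/3 (mod ℤ)`,
or vice versa, then `K_{(-a,-b)}` has exactly three apexpoints. -/
theorem hornG3_three_apexpoints (a b : ℝ)
    (h : ((∃ n : ℤ, a - 1/2 = n) ∧ ((∃ n : ℤ, b - 1/3 = n) ∨ (∃ n : ℤ, b - 2/3 = n))) ∨
         (((∃ n : ℤ, a - 1/3 = n) ∨ (∃ n : ℤ, a - 2/3 = n)) ∧ (∃ n : ℤ, b - 1/2 = n))) :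
    {x : Fin 2 → ℝ | IsApex hornG3 ![-a, -b] x}.Finite ∧
    {x : Fin 2 → ℝ | IsApex hornG3 ![-a, -b] x}.ncard = 3 := by
  suffices ∃ r s : ℝ, 2 * r + s ∈ Set.Ioc 1 2 ∧ r + 2 * s ∈ Set.Ioc 1 2 ∧
      (∃ k : ℤ, a - r = k) ∧ ∃ l : ℤ, b - s = l by
    obtain ⟨r, s, hU, hV, ha, hb⟩ := this
    have h3 := ncard_setOf_isApex_hornG3 hU hV ha hb
    exact ⟨Set.finite_of_ncard_ne_zero (by rw [h3]; norm_num), h3⟩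
  rcases h with ⟨ha, hb | hb⟩ | ⟨ha | ha, hb⟩
  · exact ⟨1/2, 1/3, by norm_num, by norm_num, ha, hb⟩
  · exact ⟨1/2, 2/3, by norm_num, by norm_num, ha, hb⟩
  · exact ⟨1/3, 1/2, by norm_num, by norm_num, ha, hb⟩
  · exact ⟨2/3, 1/2, by norm_num, by norm_num, ha, hb⟩
end

section
/- Let A = {a_1, a_2, a_3, a_4} ⊂ ℤ^3 with a_1 = (1,0,0), a_2 = (0,1,0), a_3 = (0,0,1), a_4 = (1,1,−1), so that C(A) = {(x,y,z) ∈ ℝ^3 : x ≥ 0, y ≥ 0, x + z ≥ 0, y + z ≥ 0}. Let a, b, c ∈ (−1,0) and set α = (−a, −b, c−1). If a < c and b < c, then (−a, −b, c) is the unique apexpoint of K_α; if c < a and c < b, then (−a, −b, 1+c) is the unique apexpoint of K_α. -/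
/-- The Euler–Gauss set `A = {(1,0,0), (0,1,0), (0,0,1), (1,1,-1)} ⊂ ℤ³`. -/
def gaussA : Fin 4 → Fin 3 → ℤ := ![![1, 0, 0], ![0, 1, 0], ![0, 0, 1], ![1, 1, -1]]

lemma mem_cone_iff (x : Fin 3 → ℝ) :
    x ∈ coneOf gaussA ↔ 0 ≤ x 0 ∧ 0 ≤ x 1 ∧ 0 ≤ x 0 + x 2 ∧ 0 ≤ x 1 + x 2 := by
  constructor
  · rintro ⟨c, hc, rfl⟩
    simp [Fin.sum_univ_four, gaussA]
    refine ⟨?_, ?_, ?_, ?_⟩ <;> nlinarith [hc 0, hc 1, hc 2, hc 3]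
  · rintro ⟨h0, h1, h2, h3⟩
    rcases le_total 0 (x 2) with hz | hz
    · refine ⟨![x 0, x 1, x 2, 0], ?_, ?_⟩
      · intro i; fin_cases i <;> simp [*]
      · funext j; fin_cases j <;> simp [Fin.sum_univ_four, gaussA]
    · refine ⟨![x 0 + x 2, x 1 + x 2, 0, -(x 2)], ?_, ?_⟩
      · intro i; fin_cases i <;> simp [*] <;> linarith
      · funext j; fin_cases j <;> simp [Fin.sum_univ_four, gaussA] <;> ring

/-- If `p ∈ K_α` and every `q ∈ K_α` satisfies `q - p ∈ C(A)`, then `p` is the unique apex. -/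
lemma apex_of_min (α p : Fin 3 → ℝ) (hp : p ∈ Kset gaussA α)
    (hmin : ∀ q ∈ Kset gaussA α, q - p ∈ coneOf gaussA) :
    ∀ x : Fin 3 → ℝ, IsApex gaussA α x ↔ x = p := by
  intro x
  constructor
  · rintro ⟨hx, hap⟩
    by_contra hne
    exact hap p hp (fun h => hne h.symm) (hmin x hx)
  · rintro rfl
    refine ⟨hp, ?_⟩
    intro q hq hne hcon
    obtain ⟨h1, h2, h3, h4⟩ := (mem_cone_iff _).1 hcon
    obtain ⟨g1, g2, g3, g4⟩ := (mem_cone_iff _).1 (hmin q hq)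
    simp only [Pi.sub_apply] at h1 h2 h3 h4 g1 g2 g3 g4
    apply hne
    funext j; fin_cases j
    · simpa using le_antisymm (by linarith) (by linarith)
    · simpa using le_antisymm (by linarith) (by linarith)
    · simpa using le_antisymm (by linarith) (by linarith)

/-- Main case lemma: p = (-a, -b, (k-1)+c) with m = (0,0,k). -/
lemma gauss_case (a b c : ℝ) (ha0 : -1 < a) (ha1 : a < 0) (hb0 : -1 < b) (hb1 : b < 0)
    (k : ℤ) (h1a : (k : ℝ) - 1 < 1 + a - c) (h2a : 1 + a - c ≤ k)
    (h1b : (k : ℝ) - 1 < 1 + b - c) (h2b : 1 + b - c ≤ k) :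
    ∀ x : Fin 3 → ℝ, IsApex gaussA ![-a, -b, c - 1] x ↔ x = ![-a, -b, (k : ℝ) - 1 + c] := by
  apply apex_of_min
  · constructor
    · exact ⟨![0, 0, k], by funext j; fin_cases j <;> simp <;> ring⟩
    · rw [mem_cone_iff]
      refine ⟨by simpa using ha1.le, by simpa using hb1.le, ?_, ?_⟩ <;> simp <;> linarith
  · rintro q ⟨⟨m, rfl⟩, hcone⟩
    obtain ⟨h1, h2, h3, h4⟩ := (mem_cone_iff _).1 hcone
    simp only [Matrix.cons_val_zero, Matrix.cons_val_one, Matrix.head_cons,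
      Matrix.cons_val_two, Matrix.tail_cons] at h1 h2 h3 h4
    -- integer bounds
    have hm0 : (0 : ℝ) ≤ m 0 := by
      have : (-1 : ℤ) < m 0 := by exact_mod_cast (by linarith : (-1 : ℝ) < (m 0 : ℝ))
      exact_mod_cast (by omega : (0 : ℤ) ≤ m 0)
    have hm1 : (0 : ℝ) ≤ m 1 := by
      have : (-1 : ℤ) < m 1 := by exact_mod_cast (by linarith : (-1 : ℝ) < (m 1 : ℝ))
      exact_mod_cast (by omega : (0 : ℤ) ≤ m 1)
    have hs0 : (k : ℝ) ≤ (m 0 : ℝ) + (m 2 : ℝ) := by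
      have : k - 1 < m 0 + m 2 := by
        exact_mod_cast (by push_cast; linarith : ((k : ℝ) - 1 : ℝ) < ((m 0 + m 2 : ℤ) : ℝ))
      exact_mod_cast (by omega : k ≤ m 0 + m 2)
    have hs1 : (k : ℝ) ≤ (m 1 : ℝ) + (m 2 : ℝ) := by
      have : k - 1 < m 1 + m 2 := by
        exact_mod_cast (by push_cast; linarith : ((k : ℝ) - 1 : ℝ) < ((m 1 + m 2 : ℤ) : ℝ))
      exact_mod_cast (by omega : k ≤ m 1 + m 2)
    rw [mem_cone_iff]
    refine ⟨?_, ?_, ?_, ?_⟩ <;> simp [Pi.sub_apply]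
    · exact_mod_cast hm0
    · exact_mod_cast hm1
    · linarith
    · linarith

/-- in the Euler–Gauss configuration with `a, b, c ∈ (-1,0)` and
`α = (-a, -b, c-1)`: if `a, b < c` then `(-a, -b, c)` is the unique apexpoint of `K_α`;
if `c < a, b` then `(-a, -b, 1+c)` is the unique apexpoint of `K_α`. -/
theorem gauss_noninterlacing_unique_apexpoint (a b c : ℝ)
    (ha : -1 < a ∧ a < 0) (hb : -1 < b ∧ b < 0) (hc : -1 < c ∧ c < 0) :
    ((a < c ∧ b < c) →
      ∀ x : Fin 3 → ℝ, IsApex gaussA ![-a, -b, c - 1] x ↔ x = ![-a, -b, c]) ∧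
    ((c < a ∧ c < b) →
      ∀ x : Fin 3 → ℝ, IsApex gaussA ![-a, -b, c - 1] x ↔ x = ![-a, -b, 1 + c]) := by
  obtain ⟨ha0, ha1⟩ := ha; obtain ⟨hb0, hb1⟩ := hb; obtain ⟨hc0, hc1⟩ := hc
  constructor
  · rintro ⟨hac, hbc⟩ x
    have h := gauss_case a b c ha0 ha1 hb0 hb1 1
      (by push_cast; linarith) (by push_cast; linarith)
      (by push_cast; linarith) (by push_cast; linarith) x
    have e : ![-a, -b, ((1 : ℤ) : ℝ) - 1 + c] = ![-a, -b, c] := by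
      funext j; fin_cases j <;> norm_num
    rwa [e] at h
  · rintro ⟨hca, hcb⟩ x
    have h := gauss_case a b c ha0 ha1 hb0 hb1 2
      (by push_cast; linarith) (by push_cast; linarith)
      (by push_cast; linarith) (by push_cast; linarith) x
    have e : ![-a, -b, ((2 : ℤ) : ℝ) - 1 + c] = ![-a, -b, 1 + c] := by
      funext j; fin_cases j <;> norm_num <;> ring
    rwa [e] at h
end
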